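/- Let R be a v-Marot Mori commutative ring. Then R is a weakly Krull ring if and only if the set of regular prime v-ideals of R equals the set X_r(R) of regular prime ideals of regular height one. -/

import Mathlib

/-!
Forward direction. If `P` is a regular prime `v`-ideal and `a ∈ P` is regular, then `P` is
covered by the finitely many `Q ∈ X_r(R)` containing `a`: for `b ∈ P` outside all of them the
intersection property gives `(R : {a, b}) = R`, so `{a, b}_v = R ⊆ P_v = P`. Prime avoidance
puts `P` inside one such `Q`, and `P = Q`. Conversely, in a Mori ring each `P ∈ X_r(R)` is
divisorial: `P` is minimal over `aR`, so every `x ∈ P` has `σ x^k ∈ aR` with `σ ∉ P`, and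
this lets a maximal divisorial ideal `A` with `aR ⊆ A ⊆ P` absorb `x`, whence `P = A`.

Backward direction. A maximal proper regular `v`-ideal is prime, hence in `X_r(R)`; applied to
`(R : {1, z})` this gives `R = ⋂ R_[P]`. If a regular `x` lay in infinitely many
`P₀, P₁, … ∈ X_r(R)`, the divisorial ideals `P₀ ∩ ⋯ ∩ Pₙ` would decrease strictly, and
`I ↦ x (R : I)` would turn them into a strictly increasing chain.
-/

namespace Paper

/-- The set of regular elements of a subset `A` of an ambient commutative ring `T`:
the elements of `A` that are non-zero-divisors on `A`. -/
def reg {T : Type*} [CommRing T] (A : Set T) : Set T :=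
  {x | x ∈ A ∧ ∀ y ∈ A, x * y = 0 → y = 0}

/-- The units of a subset `A`: the elements of `A` having an inverse in `A`. -/
def unitsIn {T : Type*} [CommRing T] (A : Set T) : Set T :=
  {x | x ∈ A ∧ ∃ y ∈ A, x * y = 1}

/-- `(R : X) = {z ∈ T : z·X ⊆ R}`. -/
def colonS {T : Type*} [CommRing T] (R : Subring T) (X : Set T) : Set T :=
  {z : T | ∀ x ∈ X, z * x ∈ R}

/-- The `v`-operation `X ↦ X_v = (X⁻¹)⁻¹ = (R : (R : X))`. -/
def vOp {T : Type*} [CommRing T] (R : Subring T) (X : Set T) : Set T :=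
  colonS R (colonS R X)

/-- `M` is an `R`-submodule of the ambient ring `T`. -/
def IsSubmoduleOf {T : Type*} [CommRing T] (R : Subring T) (M : Set T) : Prop :=
  (0 : T) ∈ M ∧ (∀ x ∈ M, ∀ y ∈ M, x + y ∈ M) ∧
    ∀ r ∈ (R : Set T), ∀ x ∈ M, r * x ∈ M

/-- `I` is an (integral) ideal of the subring `R`. -/
def IsIdealOf {T : Type*} [CommRing T] (R : Subring T) (I : Set T) : Prop :=
  IsSubmoduleOf R I ∧ I ⊆ (R : Set T)

/-- `P` is a prime ideal of the subring `R`. -/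
def IsPrimeIdealOf {T : Type*} [CommRing T] (R : Subring T) (P : Set T) : Prop :=
  IsIdealOf R P ∧ P ≠ (R : Set T) ∧
    ∀ x ∈ (R : Set T), ∀ y ∈ (R : Set T), x * y ∈ P → x ∈ P ∨ y ∈ P

/-- `R` is a `v`-Marot ring: every regular fractional `v`-ideal `I` is
`v`-generated by its set `I^•` of regular elements, i.e. `I = (I^•·R)_v`. -/
def IsVMarot {T : Type*} [CommRing T] (R : Subring T) : Prop :=
  ∀ I : Set T, IsSubmoduleOf R I → (∃ x ∈ I, x ∈ reg (Set.univ : Set T)) →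
    (∃ c ∈ reg (R : Set T), ∀ x ∈ I, c * x ∈ R) → vOp R I = I →
    I = vOp R (I ∩ reg (Set.univ : Set T))

/-- `D` is completely integrally closed in the ambient total quotient ring `T`:
every almost integral element of `T` lies in `D`. -/
def IsCIC {T : Type*} [CommRing T] (D : Subring T) : Prop :=
  ∀ x : T, (∃ c ∈ reg (D : Set T), ∀ n : ℕ, c * x ^ n ∈ D) → x ∈ D

/-- `D` is a Mori ring: the ascending chain condition holds on regular
divisorial integral ideals of `D`. -/
def IsMoriRing {T : Type*} [CommRing T] (D : Subring T) : Prop :=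
  ∀ f : ℕ → Set T,
    (∀ n, f n ⊆ (D : Set T) ∧ vOp D (f n) = f n ∧ ∃ x ∈ f n, x ∈ reg (D : Set T)) →
    (∀ n, f n ⊆ f (n + 1)) → ∃ n, ∀ m, n ≤ m → f m = f n

/-- `X_r(R)`: the set of regular prime ideals of `R` of regular height one,
i.e. those regular prime ideals containing no strictly smaller regular prime
ideal. -/
def regHtOne {T : Type*} [CommRing T] (R : Subring T) : Set (Set T) :=
  {P | IsPrimeIdealOf R P ∧ (∃ x ∈ P, x ∈ reg (R : Set T)) ∧
    ∀ Q : Set T, IsPrimeIdealOf R Q → (∃ x ∈ Q, x ∈ reg (R : Set T)) → Q ⊆ P → Q = P}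

/-- `R_[P] = {z ∈ T : z·s ∈ R for some s ∈ R ∖ P}`. -/
def locB {T : Type*} [CommRing T] (R : Subring T) (P : Set T) : Set T :=
  {z : T | ∃ s ∈ (R : Set T), s ∉ P ∧ z * s ∈ R}

/-- `R` is a weakly Krull ring: `R = ⋂_{P ∈ X_r(R)} R_[P]` and every regular
element of `R` lies in only finitely many members of `X_r(R)`. -/
def IsWeaklyKrull {T : Type*} [CommRing T] (R : Subring T) : Prop :=
  ((R : Set T) = ⋂ P ∈ regHtOne R, locB R P) ∧
    ∀ x ∈ reg (R : Set T), {P ∈ regHtOne R | x ∈ P}.Finite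

open Pointwise

section VOperation

variable {T : Type*} [CommRing T] (R : Subring T)

lemma colonS_anti {X Y : Set T} (h : X ⊆ Y) : colonS R Y ⊆ colonS R X :=
  fun _ hz x hx => hz x (h hx)

lemma subset_vOp (X : Set T) : X ⊆ vOp R X :=
  fun x hx z hz => mul_comm z x ▸ hz x hx

lemma vOp_mono {X Y : Set T} (h : X ⊆ Y) : vOp R X ⊆ vOp R Y :=
  colonS_anti R (colonS_anti R h)

lemma vOp_colonS (X : Set T) : vOp R (colonS R X) = colonS R X :=
  (colonS_anti R (subset_vOp R X)).antisymm (subset_vOp R (colonS R X))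

lemma vOp_idem (X : Set T) : vOp R (vOp R X) = vOp R X :=
  vOp_colonS R _

lemma colonS_self : colonS R (R : Set T) = R := by
  refine subset_antisymm (fun z hz => ?_) (fun r hr x hx => R.mul_mem hr hx)
  simpa using hz 1 R.one_mem

lemma vOp_self : vOp R (R : Set T) = R := by
  rw [vOp, colonS_self, colonS_self]

lemma vOp_subset {X : Set T} (hX : X ⊆ R) : vOp R X ⊆ R :=
  vOp_self R ▸ vOp_mono R hX

lemma colonS_subset_of_one_mem {X : Set T} (hX : (1 : T) ∈ X) : colonS R X ⊆ R :=
  fun z hz => by simpa using hz 1 hX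

lemma isSubmoduleOf_colonS (X : Set T) : IsSubmoduleOf R (colonS R X) := by
  refine ⟨fun x _ => by simp, fun z hz w hw x hx => ?_, fun r hr z hz x hx => ?_⟩
  · rw [add_mul]; exact R.add_mem (hz x hx) (hw x hx)
  · rw [mul_assoc]; exact R.mul_mem hr (hz x hx)

lemma isSubmoduleOf_of_vOp_eq {X : Set T} (hX : vOp R X = X) : IsSubmoduleOf R X :=
  hX ▸ isSubmoduleOf_colonS R _

lemma mul_vOp_subset {y : T} {A B : Set T} (hB : vOp R B = B) (h : ∀ a ∈ A, y * a ∈ B) :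
    ∀ w ∈ vOp R A, y * w ∈ B := by
  intro w hw
  rw [← hB]
  intro z hz
  have hzy : z * y ∈ colonS R A := fun a ha => by
    simpa only [mul_assoc] using hz _ (h a ha)
  simpa only [mul_comm, mul_left_comm] using hw _ hzy

lemma vOp_iInter {ι : Sort*} (f : ι → Set T) (h : ∀ i, vOp R (f i) = f i) :
    vOp R (⋂ i, f i) = ⋂ i, f i :=
  (Set.subset_iInter fun i => h i ▸ vOp_mono R (Set.iInter_subset f i)).antisymm
    (subset_vOp R _)

lemma colonS_smul (u : Tˣ) (X : Set T) : colonS R (u • X) = u⁻¹ • colonS R X := by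
  ext z
  rw [Set.mem_smul_set_iff_inv_smul_mem, inv_inv, ← Set.image_smul]
  simp only [colonS, Set.mem_ofPred_eq, Set.forall_mem_image, Units.smul_def, smul_eq_mul,
    mul_assoc, mul_left_comm z]

lemma vOp_smul (u : Tˣ) (X : Set T) : vOp R (u • X) = u • vOp R X := by
  rw [vOp, vOp, colonS_smul, colonS_smul, inv_inv]

lemma mul_pow_mem_of_mem_vOp_insert {A : Set T} (hA : vOp R A = A)
    {x σ t : T} (hx : x ∈ R) (hσ : σ ∈ R) (ht : t ∈ vOp R (insert x A)) (htR : t ∈ R) {k : ℕ}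
    (hk : σ * x ^ k ∈ A) : σ * t ^ k ∈ A := by
  -- trade the factors `x` for `t` one at a time: if `σ x^(j+1) t^i ∈ A`, then
  -- `σ x^j t^i` multiplies `insert x A`, hence also `t`, into `A`
  have key : ∀ i j, i + j = k → σ * x ^ j * t ^ i ∈ A := by
    intro i
    induction i with
    | zero => rintro j rfl; simpa using hk
    | succ i ih =>
      intro j hj
      have hy : σ * x ^ j * t ^ i ∈ R := R.mul_mem (R.mul_mem hσ (pow_mem hx j)) (pow_mem htR i)
      have hmul : ∀ a ∈ insert x A, σ * x ^ j * t ^ i * a ∈ A := by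
        rintro a (rfl | ha)
        · convert ih (j + 1) (by omega) using 1
          ring
        · exact (isSubmoduleOf_of_vOp_eq R hA).2.2 _ hy a ha
      simpa only [pow_succ, mul_assoc] using mul_vOp_subset R hA hmul t ht
  simpa using key k 0 rfl

end VOperation

section PrimeIdeals

variable {T : Type*} [CommRing T] {R : Subring T}

lemma IsPrimeIdealOf.one_notMem {P : Set T} (hP : IsPrimeIdealOf R P) : (1 : T) ∉ P := fun h1 =>
  hP.2.1 (hP.1.2.antisymm fun r hr => by simpa using hP.1.1.2.2 r hr 1 h1)

lemma IsPrimeIdealOf.mem_of_pow_mem {P : Set T} (hP : IsPrimeIdealOf R P) {t : T}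
    (ht : t ∈ R) : ∀ {k : ℕ}, t ^ k ∈ P → t ∈ P
  | 0, h => absurd (pow_zero t ▸ h) hP.one_notMem
  | k + 1, h => (hP.2.2 _ (pow_mem ht k) t ht (pow_succ t k ▸ h)).elim (hP.mem_of_pow_mem ht) id

def idealOf (R : Subring T) (I : Set T) : Ideal R :=
  Ideal.span (Subtype.val ⁻¹' I)

lemma mem_idealOf {I : Set T} (hI : IsSubmoduleOf R I) {x : R} :
    x ∈ idealOf R I ↔ (x : T) ∈ I :=
  ⟨fun h => Submodule.span_induction (fun _ hy => hy) hI.1 (fun _ _ _ _ hx hy => hI.2.1 _ hx _ hy)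
    (fun c _ _ hy => hI.2.2 c c.2 _ hy) h, fun h => Ideal.subset_span h⟩

lemma subset_of_idealOf_le {I J : Set T} (hI : I ⊆ R) (hJ : IsSubmoduleOf R J)
    (h : idealOf R I ≤ idealOf R J) : I ⊆ J :=
  fun x hx => (mem_idealOf hJ).1 (h (Ideal.subset_span (show (⟨x, hI hx⟩ : R) ∈ _ from hx)))

lemma IsPrimeIdealOf.isPrime_idealOf {P : Set T} (hP : IsPrimeIdealOf R P) :
    (idealOf R P).IsPrime where
  ne_top' h := hP.one_notMem ((mem_idealOf hP.1.1).1 (h ▸ Submodule.mem_top : (1 : R) ∈ _))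
  mem_or_mem' {x y} h := by
    simpa only [mem_idealOf hP.1.1] using hP.2.2 x x.2 y y.2 ((mem_idealOf hP.1.1).1 h)

lemma isPrimeIdealOf_image {q : Ideal R} (hq : q.IsPrime) :
    IsPrimeIdealOf R (Subtype.val '' (q : Set R)) := by
  have hmem : ∀ x : R, (x : T) ∈ Subtype.val '' (q : Set R) ↔ x ∈ q :=
    fun x => Subtype.val_injective.mem_set_image
  refine ⟨⟨⟨⟨0, q.zero_mem, rfl⟩, ?_, ?_⟩, ?_⟩, fun h => ?_, fun x hx y hy hxy => ?_⟩
  · rintro _ ⟨x, hx, rfl⟩ _ ⟨y, hy, rfl⟩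
    exact ⟨x + y, q.add_mem hx hy, rfl⟩
  · rintro r hr _ ⟨x, hx, rfl⟩
    exact ⟨⟨r, hr⟩ * x, q.mul_mem_left _ hx, rfl⟩
  · rintro _ ⟨x, -, rfl⟩
    exact x.2
  · exact hq.ne_top ((q.eq_top_iff_one).2 ((hmem 1).1 (h ▸ R.one_mem)))
  · simpa only [hmem ⟨x, hx⟩, hmem ⟨y, hy⟩] using hq.mem_or_mem ((hmem (⟨x, hx⟩ * ⟨y, hy⟩)).1 hxy)

lemma IsIdealOf.exists_subset_of_subset_biUnion {I : Set T} (hI : IsIdealOf R I)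
    {s : Finset (Set T)} (hs : ∀ Q ∈ s, IsPrimeIdealOf R Q) (h : I ⊆ ⋃ Q ∈ s, Q) :
    ∃ Q ∈ s, I ⊆ Q := by
  have key : (idealOf R I : Set R) ⊆ ⋃ Q ∈ (s : Set (Set T)), (idealOf R Q : Set R) := by
    intro x hx
    obtain ⟨Q, hQ, hxQ⟩ := Set.mem_iUnion₂.1 (h ((mem_idealOf hI.1).1 hx))
    exact Set.mem_iUnion₂.2 ⟨Q, hQ, (mem_idealOf (hs Q hQ).1.1).2 hxQ⟩
  obtain ⟨Q, hQ, hle⟩ :=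
    (Ideal.subset_union_prime ∅ ∅ fun Q hQ _ _ => (hs Q hQ).isPrime_idealOf).1 key
  exact ⟨Q, hQ, subset_of_idealOf_le hI.2 (hs Q hQ).1.1 hle⟩

lemma IsPrimeIdealOf.exists_subset_of_biInter_subset {P : Set T} (hP : IsPrimeIdealOf R P)
    {ι : Type*} {s : Finset ι} {f : ι → Set T} (hf : ∀ i ∈ s, IsIdealOf R (f i))
    (h : ⋂ i ∈ s, f i ⊆ P) : ∃ i ∈ s, f i ⊆ P := by
  have key : s.inf (fun i => idealOf R (f i)) ≤ idealOf R P := fun x hx => by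
    rw [Submodule.mem_finsetInf] at hx
    exact (mem_idealOf hP.1.1).2
      (h (Set.mem_iInter₂.2 fun i hi => (mem_idealOf (hf i hi).1).1 (hx i hi)))
  obtain ⟨i, hi, hle⟩ := hP.isPrime_idealOf.inf_le'.1 key
  exact ⟨i, hi, subset_of_idealOf_le (hf i hi).2 hP.1.1 hle⟩

lemma exists_mul_pow_mem_of_mem_regHtOne {P : Set T} (hP : P ∈ regHtOne R) {a : T}
    (ha : a ∈ reg (R : Set T)) {c : T} (hc : c ∈ P) :
    ∃ m : ℕ, ∃ s ∈ (R : Set T), s ∉ P ∧ ∃ r ∈ (R : Set T), s * c ^ m = a * r := by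
  -- otherwise a prime of `R` containing `a` and missing every `s * c ^ m` with `s ∉ P`
  -- lies in `P`, so it is `P` by minimality, and yet it misses `c`
  by_contra hcon
  have := hP.1.isPrime_idealOf
  let a' : R := ⟨a, ha.1⟩
  let c' : R := ⟨c, hP.1.1.2 hc⟩
  let S := Submonoid.powers c' ⊔ (idealOf R P).primeCompl
  have hdisj : Disjoint (Ideal.span {a'} : Set R) S := by
    refine Set.disjoint_left.2 fun y hya hyS => hcon ?_
    obtain ⟨r, rfl⟩ := Ideal.mem_span_singleton'.1 hya
    obtain ⟨_, ⟨m, rfl⟩, s, hs, hsc⟩ := Submonoid.mem_sup.1 hyS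
    refine ⟨m, s, s.2, fun h => hs ((mem_idealOf hP.1.1.1).2 h), r, r.2, ?_⟩
    have hsc' : c ^ m * s = r * a := by simpa using congrArg Subtype.val hsc
    rw [mul_comm, hsc', mul_comm]
  obtain ⟨q, hq, haq, hqS⟩ := Ideal.exists_le_prime_disjoint _ S hdisj
  have hqP : Subtype.val '' (q : Set R) = P := by
    refine hP.2.2 _ (isPrimeIdealOf_image hq)
      ⟨a, ⟨a', haq (Ideal.mem_span_singleton_self a'), rfl⟩, ha⟩ ?_
    rintro _ ⟨y, hy, rfl⟩
    by_contra hyP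
    exact Set.disjoint_left.1 hqS hy
      (Submonoid.mem_sup_right fun h => hyP ((mem_idealOf hP.1.1.1).1 h))
  have hcq : c' ∈ q := by
    rw [← hqP] at hc
    exact Subtype.val_injective.mem_set_image.1 hc
  exact Set.disjoint_left.1 hqS hcq (Submonoid.mem_sup_left (Submonoid.mem_powers c'))

end PrimeIdeals

section Mori

variable {T : Type*} [CommRing T] {R : Subring T}

variable (R) in
def regularVIdeals : Set (Set T) :=
  {J | J ⊆ R ∧ vOp R J = J ∧ ∃ x ∈ J, x ∈ reg (R : Set T)}

lemma IsMoriRing.wellFoundedOn (hmori : IsMoriRing R) :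
    (regularVIdeals R).WellFoundedOn (· > ·) := by
  refine Set.wellFoundedOn_iff_no_descending_seq.2 fun f hf => ?_
  obtain ⟨n, hn⟩ := hmori f hf fun n => (f.map_rel_iff.2 n.lt_succ_self).le
  exact (f.map_rel_iff.2 n.lt_succ_self).ne' (hn (n + 1) n.le_succ)

lemma IsMoriRing.exists_maximal (hmori : IsMoriRing R) {Ps : Set (Set T)}
    (hPs : Ps ⊆ regularVIdeals R) (hne : Ps.Nonempty) : ∃ M, Maximal (· ∈ Ps) M :=
  (hmori.wellFoundedOn.subset hPs).exists_maximal hne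

lemma IsMoriRing.exists_eq_of_antitone (hmori : IsMoriRing R) {u : Tˣ}
    (hu : (u : T) ∈ reg (R : Set T)) {f : ℕ → Set T}
    (hf : ∀ n, f n ⊆ R ∧ vOp R (f n) = f n ∧ (u : T) ∈ f n) (hanti : Antitone f) :
    ∃ n, ∀ m, n ≤ m → f m = f n := by
  let g : ℕ → Set T := fun n => u • colonS R (f n)
  have hg : ∀ n, g n ∈ regularVIdeals R := by
    intro n
    obtain ⟨hfR, -, huf⟩ := hf n
    refine ⟨?_, by simp only [g, vOp_smul, vOp_colonS], u, ⟨1, fun x hx => ?_, by simp⟩, hu⟩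
    · rintro _ ⟨z, hz, rfl⟩
      simpa [Units.smul_def, mul_comm] using hz u huf
    · simpa using hfR hx
  obtain ⟨n, hn⟩ := hmori g hg fun n => Set.smul_set_mono (colonS_anti R (hanti n.le_succ))
  refine ⟨n, fun m hnm => ?_⟩
  have hcol : colonS R (f m) = colonS R (f n) := MulAction.injective u (hn m hnm)
  rw [← (hf m).2.1, ← (hf n).2.1, vOp, vOp, hcol]

lemma IsMoriRing.exists_prime_vOp_eq_of_subset (hmori : IsMoriRing R) {I : Set T}
    (hI : I ∈ regularVIdeals R) (hIR : I ≠ R) :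
    ∃ M, IsPrimeIdealOf R M ∧ vOp R M = M ∧ I ⊆ M := by
  obtain ⟨M, hmax⟩ := hmori.exists_maximal (Ps := {J | J ∈ regularVIdeals R ∧ J ≠ R ∧ I ⊆ J})
    (fun J hJ => hJ.1) ⟨I, hI, hIR, subset_rfl⟩
  obtain ⟨⟨hMR, hMv, hMreg⟩, hMne, hIM⟩ := hmax.prop
  have hMsub := isSubmoduleOf_of_vOp_eq R hMv
  refine ⟨M, ⟨⟨hMsub, hMR⟩, hMne, fun x hx y hy hxy => ?_⟩, hMv, hIM⟩
  by_contra! hxyM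
  have hMx : M ⊆ vOp R (insert x M) := (Set.subset_insert x M).trans (subset_vOp R _)
  have hvR : vOp R (insert x M) = R := by
    by_contra hne
    have hmem : vOp R (insert x M) ∈ {J | J ∈ regularVIdeals R ∧ J ≠ R ∧ I ⊆ J} :=
      ⟨⟨vOp_subset R (Set.insert_subset hx hMR), vOp_idem R _,
        hMreg.imp fun _ h => ⟨hMx h.1, h.2⟩⟩, hne, hIM.trans hMx⟩
    exact hxyM.1 (hmax.eq_of_ge hmem hMx ▸ subset_vOp R _ (Set.mem_insert x M))
  have hyM : ∀ a ∈ insert x M, y * a ∈ M := by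
    rintro a (rfl | ha)
    · rwa [mul_comm]
    · exact hMsub.2.2 y hy a ha
  exact hxyM.2 (by simpa using mul_vOp_subset R hMv hyM 1 (hvR ▸ R.one_mem))

lemma IsMoriRing.vOp_eq_of_mem_regHtOne (hmori : IsMoriRing R) {P : Set T}
    (hP : P ∈ regHtOne R) {u : Tˣ} (huP : (u : T) ∈ P) (hu : (u : T) ∈ reg (R : Set T)) :
    vOp R P = P := by
  have hPR := hP.1.1.2
  let Ps : Set (Set T) := {A | vOp R A = A ∧ (u : T) ∈ A ∧ A ⊆ P}
  have hprincipal : u • (R : Set T) ∈ Ps := by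
    refine ⟨by rw [vOp_smul, vOp_self], ⟨1, R.one_mem, by simp⟩, ?_⟩
    rintro _ ⟨r, hr, rfl⟩
    simpa [Units.smul_def, mul_comm] using hP.1.1.1.2.2 r hr u huP
  obtain ⟨A, hA⟩ := hmori.exists_maximal (Ps := Ps)
    (fun A hA => ⟨hA.2.2.trans hPR, hA.1, u, hA.2.1, hu⟩) ⟨_, hprincipal⟩
  obtain ⟨hAv, huA, hAP⟩ := hA.prop
  suffices hPA : P ⊆ A by rwa [hAP.antisymm hPA] at hAv
  intro x hxP
  obtain ⟨k, σ, hσ, hσP, r, hr, hσx⟩ := exists_mul_pow_mem_of_mem_regHtOne hP hu hxP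
  have hσxA : σ * x ^ k ∈ A := by
    rw [hσx, mul_comm]
    exact (isSubmoduleOf_of_vOp_eq R hAv).2.2 r hr _ huA
  have hB : vOp R (insert x A) ∈ Ps := by
    refine ⟨vOp_idem R _, subset_vOp R _ (Set.mem_insert_of_mem x huA), fun t ht => ?_⟩
    have htR : t ∈ R := vOp_subset R (Set.insert_subset (hPR hxP) (hAP.trans hPR)) ht
    have hσt := hAP (mul_pow_mem_of_mem_vOp_insert R hAv (hPR hxP) hσ ht htR hσxA)
    exact hP.1.mem_of_pow_mem htR ((hP.1.2.2 σ hσ _ (pow_mem htR k) hσt).resolve_left hσP)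
  have hAB := hA.eq_of_ge hB ((Set.subset_insert x A).trans (subset_vOp R _))
  exact hAB ▸ subset_vOp R _ (Set.mem_insert x A)

end Mori

section WeaklyKrull

variable {T : Type*} [CommRing T] {R : Subring T}

lemma vOp_pair_eq_of_forall_notMem (hR : (R : Set T) = ⋂ P ∈ regHtOne R, locB R P) {a b : T}
    (ha : a ∈ R) (hb : b ∈ R) (hab : ∀ Q ∈ regHtOne R, a ∈ Q → b ∉ Q) :
    vOp R {a, b} = R := by
  have hcol : colonS R {a, b} = R := by
    refine subset_antisymm (fun z hz => ?_) fun r hr x hx => ?_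
    · rw [hR]
      refine Set.mem_iInter₂.2 fun Q hQ => ?_
      by_cases haQ : a ∈ Q
      · exact ⟨b, hb, hab Q hQ haQ, hz b (by simp)⟩
      · exact ⟨a, ha, haQ, hz a (by simp)⟩
    · rcases hx with rfl | rfl
      exacts [R.mul_mem hr ha, R.mul_mem hr hb]
  rw [vOp, hcol, colonS_self]

lemma mem_regHtOne_of_vOp_eq (hWK : IsWeaklyKrull R) {P : Set T} (hP : IsPrimeIdealOf R P)
    (hPreg : ∃ x ∈ P, x ∈ reg (R : Set T)) (hPv : vOp R P = P) : P ∈ regHtOne R := by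
  obtain ⟨a, haP, ha⟩ := hPreg
  have hfin := hWK.2 a ha
  have hcover : P ⊆ ⋃ Q ∈ hfin.toFinset, Q := by
    intro b hbP
    by_contra hb
    simp only [Set.Finite.mem_toFinset, Set.mem_iUnion, not_exists] at hb
    have hRP : (R : Set T) ⊆ P :=
      calc (R : Set T) = vOp R {a, b} :=
            (vOp_pair_eq_of_forall_notMem hWK.1 ha.1 (hP.1.2 hbP)
              fun Q hQ haQ => hb Q ⟨hQ, haQ⟩).symm
        _ ⊆ vOp R P := vOp_mono R (Set.insert_subset haP (Set.singleton_subset_iff.2 hbP))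
        _ = P := hPv
    exact hP.2.1 (hP.1.2.antisymm hRP)
  obtain ⟨Q, hQ, hPQ⟩ :=
    hP.1.exists_subset_of_subset_biUnion (fun Q hQ => (hfin.mem_toFinset.1 hQ).1.1) hcover
  have hQ := (hfin.mem_toFinset.1 hQ).1
  rwa [hQ.2.2 P hP ⟨a, haP, ha⟩ hPQ]

lemma IsMoriRing.eq_biInter_locB (hmori : IsMoriRing R)
    (hfr : ∀ t : T, ∃ r ∈ (R : Set T), ∃ s ∈ reg (R : Set T), t * s = r)
    (h : {P : Set T | IsPrimeIdealOf R P ∧ (∃ x ∈ P, x ∈ reg (R : Set T)) ∧ vOp R P = P}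
      ⊆ regHtOne R) :
    (R : Set T) = ⋂ P ∈ regHtOne R, locB R P := by
  refine subset_antisymm (fun z hz => Set.mem_iInter₂.2 fun Q hQ => ?_) fun z hz => ?_
  · exact ⟨1, R.one_mem, hQ.1.one_notMem, by simpa using hz⟩
  by_contra hzR
  have hmemI : ∀ s ∈ (R : Set T), s * z ∈ R → s ∈ colonS R {1, z} := by
    rintro s hs hsz _ (rfl | rfl)
    exacts [by simpa using hs, hsz]
  have hI : colonS R {1, z} ∈ regularVIdeals R := by
    obtain ⟨r, hr, s, hs, hzs⟩ := hfr z
    exact ⟨colonS_subset_of_one_mem R (Set.mem_insert 1 _), vOp_colonS R _, s,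
      hmemI s hs.1 (by rwa [mul_comm, hzs]), hs⟩
  have hIne : colonS R {1, z} ≠ R := fun hIR =>
    hzR (by simpa using (hIR ▸ R.one_mem : (1 : T) ∈ colonS R {1, z}) z (by simp))
  obtain ⟨M, hM, hMv, hIM⟩ := hmori.exists_prime_vOp_eq_of_subset hI hIne
  obtain ⟨s, hs, hsM, hzs⟩ := Set.mem_iInter₂.1 hz M
    (h ⟨hM, hI.2.2.imp fun _ hx => ⟨hIM hx.1, hx.2⟩, hMv⟩)
  exact hsM (hIM (hmemI s hs (by rwa [mul_comm])))

lemma IsMoriRing.finite_setOf_mem_regHtOne (hmori : IsMoriRing R)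
    (hreg : ∀ x ∈ reg (R : Set T), IsUnit x) (h : ∀ P ∈ regHtOne R, vOp R P = P) {x : T}
    (hx : x ∈ reg (R : Set T)) : {P ∈ regHtOne R | x ∈ P}.Finite := by
  by_contra hinf
  let e := Set.Infinite.natEmbedding _ hinf
  let P : ℕ → Set T := fun k => e k
  have hP : ∀ k, P k ∈ regHtOne R ∧ x ∈ P k := fun k => (e k).2
  let I : ℕ → Set T := fun n => ⋂ k ∈ Finset.range (n + 1), P k
  obtain ⟨u, rfl⟩ := hreg x hx
  have hI : ∀ n, I n ⊆ R ∧ vOp R (I n) = I n ∧ (u : T) ∈ I n := fun n =>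
    ⟨(Set.iInter₂_subset 0 (by simp)).trans (hP 0).1.1.1.2,
      vOp_iInter R _ fun k => vOp_iInter R _ fun _ => h _ (hP k).1,
      Set.mem_iInter₂.2 fun k _ => (hP k).2⟩
  have hanti : Antitone I := fun m n hmn y hy =>
    Set.mem_iInter₂.2 fun k hk =>
      Set.mem_iInter₂.1 hy k (Finset.mem_range.2 ((Finset.mem_range.1 hk).trans_le (by omega)))
  obtain ⟨N, hN⟩ := hmori.exists_eq_of_antitone hx hI hanti
  have hIN : I N ⊆ P (N + 1) :=
    hN (N + 1) N.le_succ ▸ Set.iInter₂_subset (N + 1) (by simp)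
  obtain ⟨k, hk, hkN⟩ :=
    (hP (N + 1)).1.1.exists_subset_of_biInter_subset (fun k _ => (hP k).1.1.1) hIN
  have hPk : P k = P (N + 1) := (hP (N + 1)).1.2.2 _ (hP k).1.1 (hP k).1.2.1 hkN
  exact (Finset.mem_range.1 hk).ne (e.injective (Subtype.ext hPk))

end WeaklyKrull

theorem stmt15_general {T : Type*} [CommRing T] (R : Subring T)
    (hreg : ∀ x ∈ reg (R : Set T), IsUnit x)
    (hfr : ∀ t : T, ∃ r ∈ (R : Set T), ∃ s ∈ reg (R : Set T), t * s = r)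
    (hmori : IsMoriRing R) :
    IsWeaklyKrull R ↔
      {P : Set T | IsPrimeIdealOf R P ∧ (∃ x ∈ P, x ∈ reg (R : Set T)) ∧ vOp R P = P}
        = regHtOne R := by
  have hXr_div : ∀ P ∈ regHtOne R, vOp R P = P := fun P hP => by
    obtain ⟨a, haP, ha⟩ := hP.2.1
    obtain ⟨u, rfl⟩ := hreg a ha
    exact hmori.vOp_eq_of_mem_regHtOne hP haP ha
  refine ⟨fun hWK => ?_, fun hEq => ?_⟩
  · ext P
    exact ⟨fun ⟨hP, hPreg, hPv⟩ => mem_regHtOne_of_vOp_eq hWK hP hPreg hPv,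
      fun hP => ⟨hP.1, hP.2.1, hXr_div P hP⟩⟩
  · exact ⟨hmori.eq_biInter_locB hfr hEq.subset,
      fun x hx => hmori.finite_setOf_mem_regHtOne hreg hXr_div hx⟩

/-- a `v`-Marot Mori ring `R` is weakly Krull if and only if the
set of regular prime `v`-ideals of `R` equals the set `X_r(R)` of regular prime
ideals of regular height one. -/
theorem stmt15 {T : Type*} [CommRing T] [Nontrivial T] (R : Subring T)
    (hreg : ∀ x ∈ reg (R : Set T), IsUnit x)
    (hfr : ∀ t : T, ∃ r ∈ (R : Set T), ∃ s ∈ reg (R : Set T), t * s = r)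
    (hvm : IsVMarot R) (hmori : IsMoriRing R) :
    IsWeaklyKrull R ↔
      {P : Set T | IsPrimeIdealOf R P ∧ (∃ x ∈ P, x ∈ reg (R : Set T)) ∧ vOp R P = P}
        = regHtOne R :=
  stmt15_general R hreg hfr hmori

end Paper
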